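/- arXiv:1603.02304 — 6 statements merged into one kernel-verified Lean document; each statement's English description precedes it below -/
import Mathlib

section
/- For every pair of integers (p,q) ∈ ℤ², every real ρ ≥ 0, and every real σ, one has φ^{(p,q)}(ρ e^{iσ}) = e^{i(p-q)σ} · f^{(p,q)}(ρ). -/
/-- The bivariate polynomial `∂_Y^p ∂_X^q (1-XY)^{p+q-1}`, with `X = X 0`, `Y = X 1`. -/
noncomputable def scatteringD (p q : ℕ) : MvPolynomial (Fin 2) ℂ :=
  (fun P => MvPolynomial.pderiv (1 : Fin 2) P)^[p]
    ((fun P => MvPolynomial.pderiv (0 : Fin 2) P)^[q]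
      ((1 - MvPolynomial.X 0 * MvPolynomial.X 1) ^ (p + q - 1)))

/-- Scattering polynomial `φ^{(p,q)}`. -/
noncomputable def scatteringPhi (p q : ℤ) (ζ : ℂ) : ℂ :=
  if 1 ≤ p ∧ 1 ≤ q then
    ((-1 : ℂ) ^ p.toNat / ((q : ℂ) * (Nat.factorial (p.toNat + q.toNat - 1) : ℂ)))
      * (1 - ζ * (starRingEnd ℂ) ζ)
      * MvPolynomial.eval (fun i : Fin 2 => if i = 0 then ζ else (starRingEnd ℂ) ζ)
          (scatteringD p.toNat q.toNat)
  else if 0 ≤ p ∧ q = 0 then ζ ^ p.toNat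
  else 0

/-- The real polynomial `f^{(p,q)}`. -/
noncomputable def scatteringF (p q : ℤ) (x : ℝ) : ℝ :=
  if 1 ≤ p ∧ 1 ≤ q then
    (-1 : ℝ) ^ (q.toNat + (min p q - 1).toNat + 1) / (q : ℝ) * (1 - x ^ 2)
      * x ^ (p - q).natAbs
      * ∑ j ∈ Finset.range ((min p q - 1).toNat + 1),
          (-1 : ℝ) ^ j
            * ((Nat.factorial (j + (min p q - 1).toNat + (p - q).natAbs + 1) : ℝ) /
                ((Nat.factorial j : ℝ) * (Nat.factorial (j + (p - q).natAbs) : ℝ)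
                  * (Nat.factorial ((min p q - 1).toNat - j) : ℝ)))
            * x ^ (2 * j)
  else if 0 ≤ p ∧ q = 0 then x ^ p.toNat
  else 0

/-! Expand `(1 - XY)^(p+q-1)` binomially. The derivatives `∂_Y^p ∂_X^q` kill `(XY)^k` for
`k < max p q` and send the other monomials to falling-factorial multiples of `X^(k-q) Y^(k-p)`,
which at `(ζ, conj ζ)` with `ζ = ρ e^{iσ}` all equal `ρ^(2k-p-q) e^{i(p-q)σ}`: the phase factors
out. Writing `n = p+q-1` and `k = max p q + j`, the surviving coefficients are those of `f^{(p,q)}` because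
`C(n,k) · k!/(k-q)! · k!/(k-p)! / n! = k! / ((n-k)! (k-q)! (k-p)!)` and `{k-q, k-p} = {j, j+|p-q|}`. -/

open MvPolynomial Finset Complex
open scoped Nat ComplexConjugate

lemma iterate_pderiv_X_pow_mul {σ R : Type*} [CommSemiring R] (i : σ) (n a : ℕ)
    {f : MvPolynomial σ R} (hf : pderiv i f = 0) :
    (pderiv i)^[n] (X i ^ a * f) = a.descFactorial n • (X i ^ (a - n) * f) := by
  induction n with
  | zero => simp
  | succ n ih =>
    rw [Function.iterate_succ_apply', ih, map_nsmul, pderiv_mul, hf, pderiv_pow, pderiv_X_self,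
      Nat.descFactorial_succ, mul_smul, Nat.sub_sub]
    simp only [mul_zero, add_zero, mul_one, nsmul_eq_mul]
    ring

lemma pderiv_X_pow_of_ne {σ R : Type*} [CommSemiring R] {i j : σ} (h : j ≠ i) (a : ℕ) :
    pderiv i (X j ^ a : MvPolynomial σ R) = 0 := by
  simp [pderiv_X_of_ne h]

lemma scatteringD_eq_sum (P Q : ℕ) :
    scatteringD P Q = ∑ k ∈ range (P + Q - 1 + 1),
      C ((-1 : ℂ) ^ k * (P + Q - 1).choose k * k.descFactorial Q * k.descFactorial P)
        * X 0 ^ (k - Q) * X 1 ^ (k - P) := by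
  have expand : (1 - X 0 * X 1 : MvPolynomial (Fin 2) ℂ) ^ (P + Q - 1) =
      ∑ k ∈ range (P + Q - 1 + 1),
        C ((-1 : ℂ) ^ k * (P + Q - 1).choose k) * (X 0 ^ k * X 1 ^ k) := by
    rw [sub_eq_neg_add, add_pow]
    refine sum_congr rfl fun k _ => ?_
    simp only [map_mul, map_pow, map_neg, map_one, map_natCast, one_pow, mul_one]
    ring
  have iterates : scatteringD P Q =
      ((pderiv 1 : Derivation ℂ _ _).toLinearMap ^ P)
        (((pderiv 0 : Derivation ℂ _ _).toLinearMap ^ Q)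
        ((1 - X 0 * X 1) ^ (P + Q - 1))) := by
    rw [Module.End.pow_apply, Module.End.pow_apply]
    rfl
  rw [iterates, expand, map_sum, map_sum]
  refine sum_congr rfl fun k _ => ?_
  rw [C_mul', map_smul, map_smul, Module.End.pow_apply _ Q, Derivation.coeFn_coe,
    iterate_pderiv_X_pow_mul 0 Q k (pderiv_X_pow_of_ne (by decide) k), map_nsmul,
    mul_comm (X 0 ^ (k - Q)),
    Module.End.pow_apply, Derivation.coeFn_coe,
    iterate_pderiv_X_pow_mul 1 P k (pderiv_X_pow_of_ne (by decide) (k - Q))]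
  simp only [smul_eq_C_mul, nsmul_eq_mul, map_mul, map_natCast]
  ring

lemma ofReal_mul_exp_pow_mul_conj_pow (ρ σ : ℝ) (a b : ℕ) :
    ((ρ : ℂ) * exp (I * σ)) ^ a * conj ((ρ : ℂ) * exp (I * σ)) ^ b
      = (ρ : ℂ) ^ (a + b) * exp (I * ((a : ℂ) - b) * σ) := by
  rw [map_mul, conj_ofReal, ← exp_conj, map_mul, conj_I,
    conj_ofReal, mul_pow, mul_pow, ← exp_nat_mul, ← exp_nat_mul, pow_add,
    mul_mul_mul_comm, ← exp_add]
  ring_nf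

lemma neg_one_pow_mul_neg_one_pow_max {M : Type*} [Monoid M] [HasDistribNeg M] (P Q j : ℕ)
    (h : 1 ≤ min P Q) :
    (-1 : M) ^ P * (-1) ^ (max P Q + j) = (-1) ^ (Q + (min P Q - 1) + 1) * (-1) ^ j := by
  rw [← pow_add, ← pow_add,
    show P + (max P Q + j) = Q + (min P Q - 1) + 1 + j + 2 * (max P Q - Q) by omega,
    pow_add _ _ (2 * _), pow_mul, neg_one_sq, one_pow, mul_one]

lemma choose_mul_descFactorial_mul_descFactorial_div_factorial {K : Type*} [Field K] [CharZero K]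
    {n k a b : ℕ} (hkn : k ≤ n) (ha : a ≤ k) (hb : b ≤ k) :
    (n.choose k * k.descFactorial a * k.descFactorial b : K) / n ! =
      k ! / ((n - k)! * (k - a)! * (k - b)!) := by
  have h1 : (n.choose k * k ! * (n - k)! : K) = n ! := by
    exact_mod_cast Nat.choose_mul_factorial_mul_factorial hkn
  have h2 : ((k - a)! * k.descFactorial a : K) = k ! := by
    exact_mod_cast Nat.factorial_mul_descFactorial ha
  have h3 : ((k - b)! * k.descFactorial b : K) = k ! := by
    exact_mod_cast Nat.factorial_mul_descFactorial hb
  rw [div_eq_div_iff (by simp [Nat.factorial_ne_zero]) (by simp [Nat.factorial_ne_zero])]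
  linear_combination (n.choose k * (n - k)! * (k - a)! * k.descFactorial a : K) * h3
    + (n.choose k * (n - k)! * k ! : K) * h2 + (k ! : K) * h1

lemma scatteringPhi_coeff_eq_scatteringF_coeff (P Q j : ℕ) (hj : j < min P Q) :
    (-1 : ℂ) ^ P / (Q * (P + Q - 1)!) * ((-1) ^ (max P Q + j) * (P + Q - 1).choose (max P Q + j)
        * (max P Q + j).descFactorial Q * (max P Q + j).descFactorial P)
      = (-1) ^ (Q + (min P Q - 1) + 1) / Q * ((-1) ^ j
        * ((j + (min P Q - 1) + (max P Q - min P Q) + 1)! /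
          (j ! * (j + (max P Q - min P Q))! * (min P Q - 1 - j)!))) := by
  set k := max P Q + j
  have denominators : (j ! * (j + (max P Q - min P Q))! * (min P Q - 1 - j)! : ℂ)
      = (P + Q - 1 - k)! * (k - Q)! * (k - P)! := by
    rw [show min P Q - 1 - j = P + Q - 1 - k by omega]
    rcases le_total P Q with h | h
    · rw [show k - Q = j by omega, show k - P = j + (max P Q - min P Q) by omega]
      ring
    · rw [show k - P = j by omega, show k - Q = j + (max P Q - min P Q) by omega]
      ring
  rw [show j + (min P Q - 1) + (max P Q - min P Q) + 1 = k by omega, denominators,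
    ← choose_mul_descFactorial_mul_descFactorial_div_factorial (by omega) (by omega) (by omega)]
  calc _ = (-1 : ℂ) ^ P * (-1) ^ k / Q
        * ((P + Q - 1).choose k * k.descFactorial Q * k.descFactorial P / (P + Q - 1)!) := by ring
    _ = _ := by rw [neg_one_pow_mul_neg_one_pow_max P Q j (by omega)]; ring

lemma scatteringPhi_polar_of_pos (P Q : ℕ) (hP : 1 ≤ P) (hQ : 1 ≤ Q) (ρ σ : ℝ) :
    scatteringPhi P Q ((ρ : ℂ) * exp (I * σ)) =
      exp (I * ((P : ℂ) - Q) * σ) * (scatteringF P Q ρ : ℂ) := by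
  set ζ := (ρ : ℂ) * exp (I * σ)
  set E := exp (I * ((P : ℂ) - Q) * σ)
  have abs_sq : ζ * conj ζ = (ρ : ℂ) ^ 2 := by
    have h := ofReal_mul_exp_pow_mul_conj_pow ρ σ 1 1
    rw [pow_one, pow_one] at h
    exact h.trans (by simp)
  have reindexed : ∑ k ∈ range (P + Q - 1 + 1),
      (-1 : ℂ) ^ k * (P + Q - 1).choose k * k.descFactorial Q * k.descFactorial P
        * ζ ^ (k - Q) * conj ζ ^ (k - P)
      = ∑ j ∈ range (min P Q),
        (-1 : ℂ) ^ (max P Q + j) * (P + Q - 1).choose (max P Q + j)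
          * (max P Q + j).descFactorial Q * (max P Q + j).descFactorial P
          * ((ρ : ℂ) ^ (max P Q - min P Q + 2 * j) * E) := by
    rw [show P + Q - 1 + 1 = max P Q + min P Q by omega, sum_range_add,
      sum_eq_zero fun k hk => ?_, zero_add]
    · refine sum_congr rfl fun j _ => ?_
      have phase : ((max P Q + j - Q : ℕ) : ℂ) - (max P Q + j - P : ℕ) = P - Q := by
        push_cast [Nat.cast_sub (show Q ≤ max P Q + j by omega),
          Nat.cast_sub (show P ≤ max P Q + j by omega)]
        ring
      rw [mul_assoc, ofReal_mul_exp_pow_mul_conj_pow, phase, show max P Q + j - Q + (max P Q + j - P)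
          = max P Q - min P Q + 2 * j by omega]
    · have : k < P ∨ k < Q := by simp at hk; omega
      rcases this with h | h <;> simp [Nat.descFactorial_eq_zero_iff_lt.mpr h]
  rw [scatteringPhi, if_pos (by omega), scatteringF, if_pos (by omega)]
  have min_eq : (min (P : ℤ) Q - 1).toNat = min P Q - 1 := by omega
  have natAbs_eq : ((P : ℤ) - Q).natAbs = max P Q - min P Q := by omega
  simp only [Int.toNat_natCast, scatteringD_eq_sum, map_sum, eval_mul, eval_pow, eval_C, eval_X,
    if_true, one_ne_zero, if_false, reindexed, abs_sq, min_eq, natAbs_eq,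
    Nat.sub_add_cancel (show 1 ≤ min P Q by omega)]
  push_cast
  simp only [mul_sum]
  refine sum_congr rfl fun j hj => ?_
  rw [pow_add]
  linear_combination ((1 - (ρ : ℂ) ^ 2) * (ρ : ℂ) ^ (max P Q - min P Q) * (ρ : ℂ) ^ (2 * j) * E)
    * scatteringPhi_coeff_eq_scatteringF_coeff P Q j (mem_range.mp hj)

theorem statement2_general (p q : ℤ) (ρ : ℝ) (σ : ℝ) :
    scatteringPhi p q ((ρ : ℂ) * Complex.exp (Complex.I * (σ : ℂ))) =
      Complex.exp (Complex.I * ((p : ℂ) - (q : ℂ)) * (σ : ℂ)) * (scatteringF p q ρ : ℂ) := by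
  by_cases hpq : 1 ≤ p ∧ 1 ≤ q
  · obtain ⟨P, rfl⟩ := Int.eq_ofNat_of_zero_le (by omega : 0 ≤ p)
    obtain ⟨Q, rfl⟩ := Int.eq_ofNat_of_zero_le (by omega : 0 ≤ q)
    simpa using scatteringPhi_polar_of_pos P Q (by omega) (by omega) ρ σ
  rw [scatteringPhi, scatteringF, if_neg hpq, if_neg hpq]
  by_cases hq : 0 ≤ p ∧ q = 0
  · obtain ⟨P, rfl⟩ := Int.eq_ofNat_of_zero_le hq.1
    rw [if_pos hq, if_pos hq, hq.2]
    simpa [mul_comm] using ofReal_mul_exp_pow_mul_conj_pow ρ σ P 0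
  · rw [if_neg hq, if_neg hq]
    simp

/-- for every `(p,q) ∈ ℤ²`, every real `ρ ≥ 0` and every real `σ`,
`φ^{(p,q)}(ρe^{iσ}) = e^{i(p-q)σ} f^{(p,q)}(ρ)`. -/
theorem statement2 (p q : ℤ) (ρ : ℝ) (hρ : 0 ≤ ρ) (σ : ℝ) :
    scatteringPhi p q ((ρ : ℂ) * Complex.exp (Complex.I * (σ : ℂ))) =
      Complex.exp (Complex.I * ((p : ℂ) - (q : ℂ)) * (σ : ℂ)) * (scatteringF p q ρ : ℂ) :=
  statement2_general p q ρ σ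
end

section
/- For every pair of nonnegative integers (p,q), the function F: ℝ² → ℂ defined by F(x,y) = φ^{(p,q)}(x+iy) satisfies, at every point (x,y) ∈ ℝ², the identity -((1-x²-y²)/4)·(∂²F/∂x² + ∂²F/∂y²)(x,y) = p·q·F(x,y); that is, φ^{(p,q)} is an eigenfunction of the weighted laplacian -Δ̃ = -((1-x²-y²)/4)(∂_xx + ∂_yy) with eigenvalue pq. -/
open MvPolynomial

theorem MvPolynomial.pderiv_pderiv_comm {R σ : Type*} [CommRing R] (i j : σ)
    (f : MvPolynomial σ R) : pderiv i (pderiv j f) = pderiv j (pderiv i f) := by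
  have h : ⁅pderiv (R := R) i, pderiv (R := R) j⁆ = 0 := by
    classical
    refine derivation_ext fun k => ?_
    simp [Derivation.commutator_apply, pderiv_X, Pi.single_apply, apply_ite]
  simpa [Derivation.commutator_apply, sub_eq_zero] using congrArg (· f) h

section Hypergeometric

variable {R : Type*} [CommRing R]

/-- On polynomials in `X 0 * X 1` this is, up to a constant, Gauss's hypergeometric operator
with `c = 1` and `a + b = α + β`. -/
noncomputable def hypergeomOp (α β : R) (f : MvPolynomial (Fin 2) R) : MvPolynomial (Fin 2) R :=
  (1 - X 0 * X 1) * pderiv 0 (pderiv 1 f) - C α * X 0 * pderiv 0 f - C β * X 1 * pderiv 1 f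

theorem pderiv_zero_hypergeomOp (α β : R) (f : MvPolynomial (Fin 2) R) :
    pderiv 0 (hypergeomOp α β f) = hypergeomOp α (β + 1) (pderiv 0 f) - C α * pderiv 0 f := by
  simp only [hypergeomOp, map_sub, pderiv_mul, pderiv_X_self, pderiv_X_of_ne one_ne_zero,
    pderiv_C, pderiv_one, map_add, map_one]
  rw [pderiv_pderiv_comm 1 0 f]
  ring

theorem pderiv_one_hypergeomOp (α β : R) (f : MvPolynomial (Fin 2) R) :
    pderiv 1 (hypergeomOp α β f) = hypergeomOp (α + 1) β (pderiv 1 f) - C β * pderiv 1 f := by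
  simp only [hypergeomOp, map_sub, pderiv_mul, pderiv_X_self, pderiv_X_of_ne zero_ne_one,
    pderiv_C, pderiv_one, map_add, map_one]
  rw [pderiv_pderiv_comm 1 0 f, pderiv_pderiv_comm 1 0 (pderiv 1 f)]
  ring

theorem hypergeomOp_iterate_pderiv_zero {α β μ : R} {f : MvPolynomial (Fin 2) R}
    (h : hypergeomOp α β f = C μ * f) (q : ℕ) :
    hypergeomOp α (β + q) ((pderiv 0)^[q] f) = C (μ + q * α) * (pderiv 0)^[q] f := by
  induction q with
  | zero => simpa using h
  | succ q ih =>
    have h' := congrArg (pderiv 0) ih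
    rw [pderiv_zero_hypergeomOp, pderiv_C_mul] at h'
    rw [Function.iterate_succ_apply', Nat.cast_succ, ← add_assoc]
    simp only [map_add, map_mul, map_natCast, map_one] at h' ⊢
    linear_combination h'

theorem hypergeomOp_iterate_pderiv_one {α β μ : R} {f : MvPolynomial (Fin 2) R}
    (h : hypergeomOp α β f = C μ * f) (p : ℕ) :
    hypergeomOp (α + p) β ((pderiv 1)^[p] f) = C (μ + p * β) * (pderiv 1)^[p] f := by
  induction p with
  | zero => simpa using h
  | succ p ih =>
    have h' := congrArg (pderiv 1) ih
    rw [pderiv_one_hypergeomOp, pderiv_C_mul] at h'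
    rw [Function.iterate_succ_apply', Nat.cast_succ, ← add_assoc]
    simp only [map_add, map_mul, map_natCast, map_one] at h' ⊢
    linear_combination h'

theorem pderiv_zero_one_sub_X_mul_X_pow_succ (m : ℕ) :
    pderiv 0 ((1 - X 0 * X 1) ^ (m + 1) : MvPolynomial (Fin 2) R)
      = C (-(m + 1 : R)) * (X 1 * (1 - X 0 * X 1) ^ m) := by
  simp only [pderiv_pow, map_sub, pderiv_one, pderiv_mul, pderiv_X_self,
    pderiv_X_of_ne one_ne_zero, Nat.add_sub_cancel, map_neg, map_add, map_natCast, map_one]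
  push_cast
  ring

theorem pderiv_one_one_sub_X_mul_X_pow_succ (m : ℕ) :
    pderiv 1 ((1 - X 0 * X 1) ^ (m + 1) : MvPolynomial (Fin 2) R)
      = C (-(m + 1 : R)) * (X 0 * (1 - X 0 * X 1) ^ m) := by
  simp only [pderiv_pow, map_sub, pderiv_one, pderiv_mul, pderiv_X_self,
    pderiv_X_of_ne zero_ne_one, Nat.add_sub_cancel, map_neg, map_add, map_natCast, map_one]
  push_cast
  ring

theorem one_sub_X_mul_X_mul_pderiv_zero_pow (m : ℕ) :
    (1 - X 0 * X 1) * pderiv 0 ((1 - X 0 * X 1) ^ m : MvPolynomial (Fin 2) R)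
      = C (-(m : R)) * (X 1 * (1 - X 0 * X 1) ^ m) := by
  cases m with
  | zero => simp
  | succ m =>
    rw [pderiv_zero_one_sub_X_mul_X_pow_succ]
    push_cast
    ring

theorem hypergeomOp_one_sub_X_mul_X_pow {α β : R} {n : ℕ} (h : α + β + n = 1) :
    hypergeomOp α β ((1 - X 0 * X 1) ^ n) = C (-(n : R)) * (1 - X 0 * X 1) ^ n := by
  cases n with
  | zero => simp [hypergeomOp]
  | succ m =>
    have hw := one_sub_X_mul_X_mul_pderiv_zero_pow (R := R) m
    have hαβ : C α + C β + (m : MvPolynomial (Fin 2) R) = 0 := by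
      simpa using congrArg C (show α + β + m = 0 by push_cast at h; linear_combination h)
    rw [hypergeomOp, pderiv_one_one_sub_X_mul_X_pow_succ, pderiv_C_mul, pderiv_mul, pderiv_X_self,
      pderiv_zero_one_sub_X_mul_X_pow_succ]
    simp only [map_neg, map_add, map_natCast, map_one, Nat.cast_succ] at hw ⊢
    linear_combination (-(m + 1 : MvPolynomial (Fin 2) R)) * X 0 * hw
      + (m + 1 : MvPolynomial (Fin 2) R) * X 0 * X 1 * (1 - X 0 * X 1) ^ m * hαβ

theorem pderiv_zero_pderiv_one_one_sub_X_mul_X_mul (f : MvPolynomial (Fin 2) R) :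
    pderiv 0 (pderiv 1 ((1 - X 0 * X 1) * f)) = hypergeomOp 1 1 f - f := by
  simp only [hypergeomOp, pderiv_mul, map_sub, map_add, map_one, pderiv_one, pderiv_X_self,
    pderiv_X_of_ne one_ne_zero, pderiv_X_of_ne zero_ne_one, map_zero]
  ring

theorem pderiv_zero_pderiv_one_one_sub_X_mul_X_mul_iterate {p q n : ℕ} (h : n + 1 = p + q) :
    pderiv 0 (pderiv 1 ((1 - X 0 * X 1) *
        (pderiv 1)^[p] ((pderiv 0)^[q] ((1 - X 0 * X 1) ^ n : MvPolynomial (Fin 2) R))))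
      = C (-(p * q : R)) * (pderiv 1)^[p] ((pderiv 0)^[q] ((1 - X 0 * X 1) ^ n)) := by
  have hR : (n : R) + 1 = p + q := by exact_mod_cast congrArg (Nat.cast : ℕ → R) h
  have hpow := hypergeomOp_one_sub_X_mul_X_pow (α := 1 - (p : R)) (β := 1 - (q : R)) (n := n)
    (by linear_combination hR)
  have hD := hypergeomOp_iterate_pderiv_one (hypergeomOp_iterate_pderiv_zero hpow q) p
  rw [sub_add_cancel, sub_add_cancel] at hD
  rw [pderiv_zero_pderiv_one_one_sub_X_mul_X_mul, hD,
    show -(n : R) + q * (1 - p) + p * 1 = 1 + -(p * q) by linear_combination -hR, map_add,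
    map_one]
  ring

end Hypergeometric

section Calculus

variable {𝕜 A σ : Type*} [NontriviallyNormedField 𝕜] [NormedCommRing A] [NormedAlgebra 𝕜 A]
  [Fintype σ]

theorem MvPolynomial.hasDerivAt_eval_comp (P : MvPolynomial σ A) {g : σ → 𝕜 → A} {a : σ → A}
    {t : 𝕜} (hg : ∀ i, HasDerivAt (g i) (a i) t) :
    HasDerivAt (fun s => eval (fun i => g i s) P)
      (eval (fun i => g i t) (∑ i, a i • pderiv i P)) t := by
  classical
  induction P using MvPolynomial.induction_on with
  | C c => simpa using hasDerivAt_const t c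
  | add P Q hP hQ =>
    simpa only [map_add, smul_add, Finset.sum_add_distrib] using hP.fun_add hQ
  | mul_X P i hP =>
    convert hP.mul (hg i) using 1
    · ext s
      simp [mul_comm]
    · simp only [Derivation.leibniz, pderiv_X, Pi.single_apply, smul_eq_mul, mul_ite, mul_one,
        mul_zero, smul_add, smul_ite, smul_zero, Finset.sum_add_distrib, Finset.sum_ite_eq,
        Finset.mem_univ, if_true, map_add, smul_eval, map_sum, map_mul, eval_X]
      rw [add_comm, Finset.sum_mul]
      congr 1
      · exact Finset.sum_congr rfl fun j _ => by ring
      · ring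

theorem MvPolynomial.iteratedDeriv_two_eval_comp (P : MvPolynomial σ A) {g : σ → 𝕜 → A}
    {a : σ → A} (hg : ∀ i t, HasDerivAt (g i) (a i) t) (t : 𝕜) :
    iteratedDeriv 2 (fun s => eval (fun i => g i s) P) t
      = eval (fun i => g i t) (∑ i, a i • pderiv i (∑ j, a j • pderiv j P)) := by
  have hderiv (Q : MvPolynomial σ A) : deriv (fun s => eval (fun i => g i s) Q)
      = fun t => eval (fun i => g i t) (∑ i, a i • pderiv i Q) := by
    ext t
    exact (hasDerivAt_eval_comp Q fun i => hg i t).deriv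
  rw [iteratedDeriv_succ, iteratedDeriv_one, hderiv, hderiv]

end Calculus

open Complex

def conjPair (ζ : ℂ) : Fin 2 → ℂ := fun i => if i = 0 then ζ else starRingEnd ℂ ζ

@[simp] theorem conjPair_zero (ζ : ℂ) : conjPair ζ 0 = ζ := rfl

@[simp] theorem conjPair_one (ζ : ℂ) : conjPair ζ 1 = starRingEnd ℂ ζ := rfl

theorem hasDerivAt_conjPair {z : ℝ → ℂ} {v : ℂ} {t : ℝ} (h : HasDerivAt z v t) (i : Fin 2) :
    HasDerivAt (fun s => conjPair (z s) i) (conjPair v i) t := by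
  fin_cases i
  · simpa using h
  · simpa using h.star

theorem laplacian_eval_conjPair (P : MvPolynomial (Fin 2) ℂ) (x y : ℝ) :
    iteratedDeriv 2 (fun t : ℝ => eval (conjPair (t + y * I)) P) x
      + iteratedDeriv 2 (fun t : ℝ => eval (conjPair (x + t * I)) P) y
      = 4 * eval (conjPair (x + y * I)) (pderiv 0 (pderiv 1 P)) := by
  have hx (i : Fin 2) (t : ℝ) :
      HasDerivAt (fun s : ℝ => conjPair (s + y * I) i) (conjPair 1 i) t :=
    hasDerivAt_conjPair ((hasDerivAt_id t).ofReal_comp.add_const _) i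
  have hy (i : Fin 2) (t : ℝ) :
      HasDerivAt (fun s : ℝ => conjPair (x + s * I) i) (conjPair I i) t :=
    hasDerivAt_conjPair
      (by simpa using ((hasDerivAt_id t).ofReal_comp.mul_const I).const_add (x : ℂ)) i
  have hpoly : ∑ i, conjPair 1 i • pderiv i (∑ j, conjPair 1 j • pderiv j P)
      + ∑ i, conjPair I i • pderiv i (∑ j, conjPair I j • pderiv j P)
      = (4 : ℂ) • pderiv 0 (pderiv 1 P) := by
    simp only [Fin.sum_univ_two, conjPair_zero, conjPair_one, map_one, conj_I, map_add,
      Derivation.map_smul, pderiv_pderiv_comm 1 0 P]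
    match_scalars <;> ring_nf <;> norm_num [I_sq]
  rw [iteratedDeriv_two_eval_comp P hx, iteratedDeriv_two_eval_comp P hy, ← map_add, hpoly,
    smul_eval]

theorem eval_conjPair_one_sub_X_mul_X (ζ : ℂ) :
    eval (conjPair ζ) (1 - X 0 * X 1) = 1 - normSq ζ := by
  simp [mul_conj]

noncomputable def scatteringPoly (p q : ℕ) : MvPolynomial (Fin 2) ℂ :=
  if q = 0 then X 0 ^ p
  else if p = 0 then 0
  else C ((-1) ^ p / (q * (p + q - 1).factorial : ℂ)) * ((1 - X 0 * X 1) * scatteringD p q)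

theorem scatteringPhi_eq_eval (p q : ℕ) (ζ : ℂ) :
    scatteringPhi p q ζ = eval (conjPair ζ) (scatteringPoly p q) := by
  rcases Nat.eq_zero_or_pos q with rfl | hq
  · simp [scatteringPhi, scatteringPoly]
  rcases Nat.eq_zero_or_pos p with rfl | hp
  · simp [scatteringPhi, scatteringPoly, hq.ne']
  have h1 : 1 ≤ (p : ℤ) ∧ 1 ≤ (q : ℤ) := by omega
  simp only [scatteringPhi, scatteringPoly, h1, hp.ne', hq.ne', and_self, if_true, if_false,
    Int.toNat_natCast, Int.cast_natCast, map_mul, eval_C, map_sub, map_one, eval_X, conjPair_zero,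
    conjPair_one]
  exact mul_assoc _ _ _

theorem one_sub_X_mul_X_mul_pderiv_pderiv_scatteringPoly (p q : ℕ) :
    (1 - X 0 * X 1) * pderiv 0 (pderiv 1 (scatteringPoly p q))
      = C (-(p * q : ℂ)) * scatteringPoly p q := by
  rcases Nat.eq_zero_or_pos q with rfl | hq
  · simp [scatteringPoly, pderiv_X_of_ne zero_ne_one]
  rcases Nat.eq_zero_or_pos p with rfl | hp
  · simp [scatteringPoly, hq.ne']
  simp only [scatteringPoly, hp.ne', hq.ne', if_false, pderiv_C_mul]
  rw [scatteringD,
    pderiv_zero_pderiv_one_one_sub_X_mul_X_mul_iterate (by omega : p + q - 1 + 1 = p + q)]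
  ring

/-- for nonnegative integers `p,q`, the function `F(x,y) = φ^{(p,q)}(x+iy)`
satisfies `-((1-x²-y²)/4)(F_xx + F_yy) = pq·F` at every point `(x,y) ∈ ℝ²`;  i.e.
`φ^{(p,q)}` is an eigenfunction of `-Δ̃ = -((1-x²-y²)/4)Δ` with eigenvalue `pq`. -/
theorem statement3 (p q : ℕ) (x y : ℝ) :
    -(((1 - x ^ 2 - y ^ 2) / 4 : ℝ) : ℂ) *
        (iteratedDeriv 2 (fun t : ℝ => scatteringPhi p q ((t : ℂ) + (y : ℂ) * Complex.I)) x +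
         iteratedDeriv 2 (fun t : ℝ => scatteringPhi p q ((x : ℂ) + (t : ℂ) * Complex.I)) y) =
      (p : ℂ) * (q : ℂ) * scatteringPhi p q ((x : ℂ) + (y : ℂ) * Complex.I) := by
  have hΦ := congrArg (eval (conjPair (x + y * I)))
    (one_sub_X_mul_X_mul_pderiv_pderiv_scatteringPoly p q)
  rw [map_mul, map_mul, eval_C, eval_conjPair_one_sub_X_mul_X, normSq_add_mul_I] at hΦ
  simp only [scatteringPhi_eq_eval]
  rw [laplacian_eval_conjPair]
  push_cast at hΦ ⊢
  linear_combination -hΦ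
end

section
/- Let p,q,p′,q′ be integers ≥ 1 with p - q ≠ p′ - q′. Then the function ζ ↦ φ^{(p,q)}(ζ) · conj(φ^{(p′,q′)}(ζ)) · 4/(1-|ζ|²) is Lebesgue-integrable on the open unit disk in ℂ, and its integral over the open unit disk equals 0; that is, φ^{(p,q)} and φ^{(p′,q′)} are orthogonal in L² of the disk with respect to the measure 4 dx dy/(1-x²-y²). -/
open MeasureTheory

/-!
Rotating the disk by `u` with `|u| = 1` multiplies `φ^{(p,q)}` by `u^(p-q)`: the substitution
`X ↦ uX, Y ↦ ū Y` fixes `(1 - XY)^(p+q-1)`, and each `∂_X` (resp. `∂_Y`) commuting past it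
contributes a factor `u` (resp. `ū`). Hence the integrand is multiplied by `u^m`, with
`m = (p - q) - (p' - q') ≠ 0`, while the rotation preserves the disk and Lebesgue measure; taking
`u^m = -1` shows the integral is its own negative. Integrability holds because the factor
`1 - |ζ|²` of each scattering polynomial cancels the singularity of the weight.
-/

open ComplexConjugate

namespace MvPolynomial

variable {R σ : Type*} [CommSemiring R]

theorem pderiv_bind₁_C_mul_X (a : σ → R) (i : σ) (P : MvPolynomial σ R) :
    pderiv i (bind₁ (fun j => C (a j) * X j) P)
      = C (a i) * bind₁ (fun j => C (a j) * X j) (pderiv i P) := by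
  induction P using MvPolynomial.induction_on with
  | C b => simp
  | add P Q hP hQ => simp only [map_add, hP, hQ, mul_add]
  | mul_X P j ih =>
    rcases eq_or_ne j i with rfl | hji
    · simp only [map_mul, bind₁_X_right, pderiv_mul, pderiv_X_self, ih, map_add, mul_one, pderiv_C]
      ring
    · simp only [map_mul, bind₁_X_right, pderiv_mul, pderiv_X_of_ne hji, ih, pderiv_C, mul_zero,
        add_zero]
      ring

theorem iterate_pderiv_C_mul (i : σ) (b : R) (n : ℕ) (P : MvPolynomial σ R) :
    (pderiv i)^[n] (C b * P) = C b * (pderiv i)^[n] P := by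
  induction n with
  | zero => rfl
  | succ n ih => simp only [Function.iterate_succ_apply', ih, pderiv_C_mul]

theorem iterate_pderiv_bind₁_C_mul_X (a : σ → R) (i : σ) (n : ℕ) (P : MvPolynomial σ R) :
    (pderiv i)^[n] (bind₁ (fun j => C (a j) * X j) P)
      = C (a i ^ n) * bind₁ (fun j => C (a j) * X j) ((pderiv i)^[n] P) := by
  induction n with
  | zero => simp
  | succ n ih =>
    simp only [Function.iterate_succ_apply', ih, pderiv_C_mul, pderiv_bind₁_C_mul_X, pow_succ,
      C_mul]
    ring

end MvPolynomial

open MvPolynomial in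
theorem bind₁_scatteringD {u w : ℂ} (h : u * w = 1) (p q : ℕ) :
    bind₁ (fun j => C (![u, w] j) * X j) (scatteringD p q)
      = C (u ^ p * w ^ q) * scatteringD p q := by
  have hbase : bind₁ (fun j => C (![u, w] j) * X j)
      ((1 - X 0 * X 1 : MvPolynomial (Fin 2) ℂ) ^ (p + q - 1))
        = (1 - X 0 * X 1) ^ (p + q - 1) := by
    simp only [map_pow, map_sub, map_one, map_mul, bind₁_X_right, Matrix.cons_val_zero,
      Matrix.cons_val_one]
    rw [mul_mul_mul_comm, ← C_mul, h, C_1, one_mul]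
  have hD : scatteringD p q
      = C (u ^ q * w ^ p) * bind₁ (fun j => C (![u, w] j) * X j) (scatteringD p q) := by
    conv_lhs => rw [scatteringD, ← hbase, iterate_pderiv_bind₁_C_mul_X, iterate_pderiv_C_mul,
      iterate_pderiv_bind₁_C_mul_X, ← mul_assoc, ← C_mul]
    simp [scatteringD, mul_comm]
  conv_rhs => rw [hD]
  rw [← mul_assoc, ← C_mul, show u ^ p * w ^ q * (u ^ q * w ^ p) = (u * w) ^ (p + q) by ring, h,
    one_pow, C_1, one_mul]

open MvPolynomial in
theorem eval_scatteringD_mul {u w : ℂ} (h : u * w = 1) (p q : ℕ) (ζ η : ℂ) :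
    eval (fun i : Fin 2 => if i = 0 then u * ζ else w * η) (scatteringD p q)
      = u ^ p * w ^ q * eval (fun i : Fin 2 => if i = 0 then ζ else η) (scatteringD p q) := by
  have hpt : (fun i : Fin 2 => if i = 0 then u * ζ else w * η)
      = fun i => eval (fun i : Fin 2 => if i = 0 then ζ else η) (C (![u, w] i) * X i) := by
    funext i; fin_cases i <;> simp
  calc _ = eval (fun i : Fin 2 => if i = 0 then ζ else η)
        (bind₁ (fun j => C (![u, w] j) * X j) (scatteringD p q)) := by
        rw [hpt]
        exact (eval₂Hom_bind₁ _ _ _ _).symm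
    _ = _ := by rw [bind₁_scatteringD h, map_mul, eval_C]

theorem continuous_eval_conj (P : MvPolynomial (Fin 2) ℂ) :
    Continuous fun ζ : ℂ => MvPolynomial.eval (fun i : Fin 2 => if i = 0 then ζ else conj ζ) P :=
  (MvPolynomial.continuous_eval P).comp <| continuous_pi fun i => by
    fin_cases i <;> simp <;> fun_prop

theorem scatteringPhi_circle_mul {p q : ℤ} (hp : 1 ≤ p) (hq : 1 ≤ q) (u : Circle) (ζ : ℂ) :
    scatteringPhi p q (u * ζ) = (u : ℂ) ^ (p - q) * scatteringPhi p q ζ := by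
  have hu : (u : ℂ) * conj (u : ℂ) = 1 := by
    rw [← Circle.coe_inv_eq_conj, Circle.coe_inv, mul_inv_cancel₀ u.coe_ne_zero]
  have hpow : (u : ℂ) ^ (p - q) = (u : ℂ) ^ p.toNat * conj (u : ℂ) ^ q.toNat := by
    rw [← Circle.coe_inv_eq_conj, Circle.coe_inv, inv_pow, ← zpow_natCast, ← zpow_natCast,
      Int.toNat_of_nonneg (by omega), Int.toNat_of_nonneg (by omega), ← div_eq_mul_inv,
      zpow_sub₀ u.coe_ne_zero]
  have hnorm : (u : ℂ) * ζ * (conj (u : ℂ) * conj ζ) = ζ * conj ζ := by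
    linear_combination (ζ * conj ζ) * hu
  simp only [scatteringPhi, if_pos (And.intro hp hq), map_mul, eval_scatteringD_mul hu, hpow,
    hnorm]
  ring

theorem exists_scatteringPhi_eq_mul {p q : ℤ} (hp : 1 ≤ p) (hq : 1 ≤ q) :
    ∃ g : ℂ → ℂ, Continuous g ∧ ∀ ζ, scatteringPhi p q ζ = ((1 - ‖ζ‖ ^ 2 : ℝ) : ℂ) * g ζ := by
  refine ⟨fun ζ => (-1 : ℂ) ^ p.toNat / ((q : ℂ) * (p.toNat + q.toNat - 1).factorial)
      * MvPolynomial.eval (fun i : Fin 2 => if i = 0 then ζ else conj ζ)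
          (scatteringD p.toNat q.toNat),
    continuous_const.mul (continuous_eval_conj _), fun ζ => ?_⟩
  rw [scatteringPhi, if_pos ⟨hp, hq⟩, Complex.mul_conj, Complex.normSq_eq_norm_sq]
  push_cast
  ring

theorem integrableOn_ball_mul_conj_mul_div {φ ψ g h : ℂ → ℂ} (hg : Continuous g)
    (hh : Continuous h) (hφ : ∀ ζ, φ ζ = ((1 - ‖ζ‖ ^ 2 : ℝ) : ℂ) * g ζ)
    (hψ : ∀ ζ, ψ ζ = ((1 - ‖ζ‖ ^ 2 : ℝ) : ℂ) * h ζ) :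
    IntegrableOn (fun ζ => φ ζ * conj (ψ ζ) * ((4 / (1 - ‖ζ‖ ^ 2) : ℝ) : ℂ))
      (Metric.ball 0 1) := by
  have hG : Continuous fun ζ : ℂ => ((4 * (1 - ‖ζ‖ ^ 2) : ℝ) : ℂ) * (g ζ * conj (h ζ)) := by
    fun_prop
  refine ((hG.continuousOn.integrableOn_compact (isCompact_closedBall 0 1)).mono_set
    Metric.ball_subset_closedBall).congr_fun (fun ζ hmem => ?_) measurableSet_ball
  have hζ : ‖ζ‖ < 1 := mem_ball_zero_iff.1 hmem
  have hweight : (1 - ‖ζ‖ ^ 2 : ℂ) ≠ 0 := by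
    exact_mod_cast (by nlinarith [norm_nonneg ζ] : (1 - ‖ζ‖ ^ 2 : ℝ) ≠ 0)
  simp only [hφ, hψ, map_mul, Complex.conj_ofReal]
  push_cast
  field_simp

theorem setIntegral_ball_eq_zero_of_circle_mul {E : Type*} [NormedAddCommGroup E]
    [NormedSpace ℂ E] {f : ℂ → E} (u : Circle) {c : ℂ} (hc : c ≠ 1)
    (hf : ∀ ζ, f (u * ζ) = c • f ζ) (r : ℝ) : ∫ ζ in Metric.ball (0 : ℂ) r, f ζ = 0 := by
  have hrot := (rotation u).measurePreserving.setIntegral_preimage_emb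
    (rotation u).toHomeomorph.measurableEmbedding f (Metric.ball 0 r)
  rw [LinearIsometryEquiv.preimage_ball, map_zero] at hrot
  simp only [rotation_apply, hf, integral_smul] at hrot
  have hzero : (c - 1) • ∫ ζ in Metric.ball (0 : ℂ) r, f ζ = 0 := by
    rw [sub_smul, hrot, one_smul, sub_self]
  exact (smul_eq_zero.1 hzero).resolve_left (sub_ne_zero.2 hc)

theorem setIntegral_ball_eq_zero_of_zpow {E : Type*} [NormedAddCommGroup E]
    [NormedSpace ℂ E] {f : ℂ → E} {m : ℤ} (hm : m ≠ 0)
    (hf : ∀ (u : Circle) ζ, f (u * ζ) = (u : ℂ) ^ m • f ζ) (r : ℝ) :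
    ∫ ζ in Metric.ball (0 : ℂ) r, f ζ = 0 := by
  refine setIntegral_ball_eq_zero_of_circle_mul (Circle.exp (Real.pi / m)) ?_ (hf _) r
  rw [← Circle.coe_zpow, ← Circle.exp_intCast_mul, mul_div_cancel₀ _ (Int.cast_ne_zero.2 hm),
    Circle.coe_exp, Complex.exp_pi_mul_I]
  norm_num

/-- for integers `p,q,p′,q′ ≥ 1` with `p - q ≠ p′ - q′`, the function
`ζ ↦ φ^{(p,q)}(ζ)·conj(φ^{(p′,q′)}(ζ))·4/(1-|ζ|²)` is Lebesgue-integrable on the open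
unit disk and its integral there is `0`: the scattering polynomials `φ^{(p,q)}` and
`φ^{(p′,q′)}` are orthogonal in `L²(𝔻, 4dxdy/(1-x²-y²))`. -/
theorem statement5 (p q p' q' : ℤ) (hp : 1 ≤ p) (hq : 1 ≤ q) (hp' : 1 ≤ p') (hq' : 1 ≤ q')
    (hne : p - q ≠ p' - q') :
    IntegrableOn (fun ζ : ℂ => scatteringPhi p q ζ * (starRingEnd ℂ) (scatteringPhi p' q' ζ)
        * ((4 / (1 - ‖ζ‖ ^ 2) : ℝ) : ℂ)) (Metric.ball (0 : ℂ) 1) volume ∧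
    ∫ ζ in Metric.ball (0 : ℂ) 1,
        scatteringPhi p q ζ * (starRingEnd ℂ) (scatteringPhi p' q' ζ)
          * ((4 / (1 - ‖ζ‖ ^ 2) : ℝ) : ℂ) = 0 := by
  obtain ⟨g, hg, hφ⟩ := exists_scatteringPhi_eq_mul hp hq
  obtain ⟨h, hh, hψ⟩ := exists_scatteringPhi_eq_mul hp' hq'
  refine ⟨integrableOn_ball_mul_conj_mul_div hg hh hφ hψ,
    setIntegral_ball_eq_zero_of_zpow (sub_ne_zero.2 hne) (fun u ζ => ?_) 1⟩
  rw [scatteringPhi_circle_mul hp hq, scatteringPhi_circle_mul hp' hq', norm_mul, Circle.norm_coe,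
    one_mul, map_mul, map_zpow₀, ← Circle.coe_inv_eq_conj, Circle.coe_inv, inv_zpow, smul_eq_mul,
    zpow_sub₀ u.coe_ne_zero (p - q)]
  ring
end

section
/- For every positive integer λ, the family of functions obtained by restricting the scattering polynomials φ^{(p,q)} to the open unit disk, indexed by the pairs of integers (p,q) with p ≥ 1, q ≥ 1 and pq = λ, is linearly independent over ℂ. (In particular this family has as many members as λ has divisors.) -/
open MvPolynomial Metric

section IteratedPartialDerivative

variable {R σ : Type*} [CommSemiring R]

theorem MvPolynomial.IsWeightedHomogeneous.iterate_pderiv {M : Type*} [AddCancelCommMonoid M]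
    {w : σ → M} {φ : MvPolynomial σ R} {m m' : M} {i : σ} {n : ℕ}
    (h : φ.IsWeightedHomogeneous w m) (h' : m' + n • w i = m) :
    ((pderiv i)^[n] φ).IsWeightedHomogeneous w m' := by
  induction n generalizing m' with
  | zero => simpa [← h'] using h
  | succ n ih =>
    rw [Function.iterate_succ_apply']
    exact (ih (m' := m' + w i) (by rw [← h', succ_nsmul', add_assoc])).pderiv rfl

theorem MvPolynomial.coeff_iterate_pderiv (i : σ) (n : ℕ) (φ : MvPolynomial σ R)
    (d : σ →₀ ℕ) :
    coeff d ((pderiv i)^[n] φ) =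
      coeff (d + Finsupp.single i n) φ * ((d i + 1).ascFactorial n : R) := by
  induction n generalizing φ with
  | zero => simp
  | succ n ih =>
    rw [Function.iterate_succ_apply, ih, coeff_pderiv, Nat.ascFactorial_succ, add_assoc,
      ← Finsupp.single_add]
    simp only [Finsupp.add_apply, Finsupp.single_eq_same]
    push_cast
    ring

end IteratedPartialDerivative

theorem Finsupp.prod_pow_zpow_eq_zpow_weight {σ K : Type*} [CommGroupWithZero K] {z : K}
    (hz : z ≠ 0) (w : σ → ℤ) (d : σ →₀ ℕ) :
    d.prod (fun i k => (z ^ w i) ^ k) = z ^ Finsupp.weight w d := by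
  induction d using Finsupp.induction_linear with
  | zero => simp
  | add f g hf hg =>
    rw [Finsupp.prod_add_index' (by simp) (by simp [pow_add]), hf, hg, map_add, zpow_add₀ hz]
  | single i k => simp [Finsupp.weight_single, ← zpow_natCast, ← zpow_mul, mul_comm]

theorem MvPolynomial.IsWeightedHomogeneous.eval_zpow_mul {σ K : Type*} [Field K] {w : σ → ℤ}
    {φ : MvPolynomial σ K} {m : ℤ} (hφ : φ.IsWeightedHomogeneous w m) {z : K} (hz : z ≠ 0)
    (x : σ → K) : eval (fun i => z ^ w i * x i) φ = z ^ m * eval x φ := by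
  induction hφ using IsWeightedHomogeneous.induction_on with
  | zero => simp
  | add p q _ _ hp hq => rw [map_add, map_add, hp, hq, mul_add]
  | monomial d r hd =>
    simp only [eval_monomial, mul_pow, Finsupp.prod_mul,
      Finsupp.prod_pow_zpow_eq_zpow_weight hz, hd]
    ring

theorem linearIndependent_of_map_smul_eq_mul {G X K ι : Type*} [MulOneClass G] [SMul G X]
    [CommRing K] [IsDomain K] {χ : ι → G →* K} (hχ : Function.Injective χ) {f : ι → X → K}
    (hf : ∀ i (g : G) (x : X), f i (g • x) = χ i g * f i x) (hf0 : ∀ i, f i ≠ 0) :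
    LinearIndependent K f := by
  rw [linearIndependent_iff']
  intro s c hc i hi
  obtain ⟨x, hx⟩ := Function.ne_iff.mp (hf0 i)
  have hχc : ∑ j ∈ s, (c j * f j x) • (χ j : G → K) = 0 := by
    funext g
    simpa [Finset.sum_apply, hf, mul_left_comm, mul_comm, mul_assoc] using congr_fun hc (g • x)
  have := linearIndependent_iff'.mp ((linearIndependent_monoidHom G K).comp χ hχ) s _ hχc i hi
  exact (mul_eq_zero.mp this).resolve_right hx

def sphereZPowHom {𝕜 : Type*} [NormedField 𝕜] (n : ℤ) : sphere (0 : 𝕜) 1 →* 𝕜 :=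
  (Units.coeHom 𝕜).comp ((unitSphereToUnits 𝕜).comp (zpowGroupHom n))

@[simp]
theorem sphereZPowHom_apply {𝕜 : Type*} [NormedField 𝕜] (n : ℤ) (z : sphere (0 : 𝕜) 1) :
    sphereZPowHom n z = (z : 𝕜) ^ n := by
  simp [sphereZPowHom]

theorem sphereZPowHom_injective : Function.Injective (sphereZPowHom (𝕜 := ℂ)) := by
  intro a b hab
  by_contra hne
  have hk : ((a - b : ℤ) : ℝ) ≠ 0 := by exact_mod_cast sub_ne_zero.mpr hne
  -- `z = exp (iπ / (a - b))` has `z ^ (a - b) = -1`.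
  set z := Circle.exp (Real.pi / (a - b : ℤ))
  have hz : (z : ℂ) ^ a = (z : ℂ) ^ b := by
    simpa using DFunLike.congr_fun hab ⟨z, mem_sphere_zero_iff_norm.mpr (Circle.norm_coe z)⟩
  apply Circle.exp_pi_ne_one
  rw [← mul_div_cancel₀ Real.pi hk, Circle.exp_intCast_mul, ← Circle.coe_eq_one, Circle.coe_zpow,
    zpow_sub₀ (Circle.coe_ne_zero z), hz, div_self (zpow_ne_zero _ (Circle.coe_ne_zero z))]

theorem eq_and_eq_of_sub_eq_of_mul_eq {R : Type*} [CommRing R] [LinearOrder R]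
    [IsStrictOrderedRing R] {a b c d : R} (hab : 0 < a + b) (hcd : 0 < c + d)
    (hsub : a - b = c - d) (hmul : a * b = c * d) : a = c ∧ b = d := by
  have hsq : (a + b) ^ 2 = (c + d) ^ 2 := by
    linear_combination (a - b + c - d) * hsub + 4 * hmul
  have hsum := (pow_left_inj₀ hab.le hcd.le two_ne_zero).mp hsq
  constructor <;> linarith

def charge : Fin 2 → ℤ := ![1, -1]

theorem weight_charge (d : Fin 2 →₀ ℕ) : Finsupp.weight charge d = d 0 - d 1 := by
  simp [Finsupp.weight_eq_sum, charge, sub_eq_add_neg]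

theorem coeff_aeval_diag_of_charge {R : Type*} [CommSemiring R] {φ : MvPolynomial (Fin 2) R}
    {m : ℤ} (hφ : φ.IsWeightedHomogeneous charge m) {d : Fin 2 →₀ ℕ}
    (hd : Finsupp.weight charge d = m) :
    (aeval (fun _ => Polynomial.X) φ).coeff (d 0 + d 1) = coeff d φ := by
  conv_lhs => rw [φ.as_sum, map_sum]
  simp only [aeval_monomial, Finsupp.prod_pow, Fin.prod_univ_two, ← pow_add,
    Polynomial.algebraMap_eq, Polynomial.finsetSum_coeff, Polynomial.coeff_C_mul_X_pow]
  rw [Finset.sum_eq_single d (fun e he hne => if_neg fun h => hne ?_) (by simp_all), if_pos rfl]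
  -- a monomial is determined by its total degree and its charge
  have hw := (hφ (mem_support_iff.mp he)).trans hd.symm
  rw [weight_charge, weight_charge] at hw
  ext i; fin_cases i <;> simp <;> omega

theorem exists_eval_diag_ne_zero_of_charge {K : Type*} [CommRing K] [IsDomain K]
    {φ : MvPolynomial (Fin 2) K} {m : ℤ} (hφ : φ.IsWeightedHomogeneous charge m) (h0 : φ ≠ 0)
    {S : Set K} (hS : S.Infinite) : ∃ t ∈ S, eval (fun _ => t) φ ≠ 0 := by
  obtain ⟨d, hd⟩ := ne_zero_iff.mp h0
  have hdiag : aeval (fun _ => Polynomial.X) φ ≠ 0 := fun h => hd <| by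
    rw [← coeff_aeval_diag_of_charge hφ (hφ hd), h, Polynomial.coeff_zero]
  by_contra! hroots
  refine hdiag (Polynomial.eq_zero_of_infinite_isRoot _ (hS.mono fun t ht => ?_))
  rw [Set.mem_ofPred_eq, Polynomial.IsRoot.def, ← Polynomial.coe_aeval_eq_eval,
    ← AlgHom.comp_apply, comp_aeval, ← hroots t ht]
  simp

theorem isWeightedHomogeneous_charge_one_sub_X_mul_X_pow {R : Type*} [CommRing R] (n : ℕ) :
    ((1 - X 0 * X 1 : MvPolynomial (Fin 2) R) ^ n).IsWeightedHomogeneous charge 0 := by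
  have hXY : (X 0 * X 1 : MvPolynomial (Fin 2) R).IsWeightedHomogeneous charge 0 := by
    simpa [charge] using
      (isWeightedHomogeneous_X R charge 0).mul (isWeightedHomogeneous_X R charge 1)
  simpa using ((isWeightedHomogeneous_one R charge).sub hXY).pow n

theorem coeff_one_sub_X_mul_X_pow {R : Type*} [CommRing R] (n : ℕ) :
    coeff (Finsupp.single 0 n + Finsupp.single 1 n)
      ((1 - X 0 * X 1 : MvPolynomial (Fin 2) R) ^ n) = (-1) ^ n := by
  have hterm (k : ℕ) : (-(X 0 * X 1) : MvPolynomial (Fin 2) R) ^ k * 1 ^ (n - k)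
        * (n.choose k : MvPolynomial (Fin 2) R)
      = monomial (Finsupp.single 0 k + Finsupp.single 1 k) ((-1) ^ k * n.choose k : R) := by
    rw [← mul_one ((-1) ^ k * n.choose k : R), ← C_mul_monomial, ← one_mul (1 : R),
      ← monomial_mul, ← X_pow_eq_monomial, ← X_pow_eq_monomial, one_pow, mul_one]
    simp only [map_mul, map_pow, map_neg, map_one, map_natCast]
    ring
  rw [sub_eq_neg_add, add_pow, coeff_sum]
  simp only [hterm, coeff_monomial]
  rw [Finset.sum_eq_single n]
  · simp
  · intro k _ hk
    rw [if_neg]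
    intro h
    exact hk (by simpa using DFunLike.congr_fun h 0)
  · simp

theorem isWeightedHomogeneous_scatteringD (p q : ℕ) :
    (scatteringD p q).IsWeightedHomogeneous charge ((p : ℤ) - q) :=
  ((isWeightedHomogeneous_charge_one_sub_X_mul_X_pow _).iterate_pderiv
    (m' := -(q : ℤ)) (by simp [charge])).iterate_pderiv (by simp [charge]; ring)

theorem scatteringD_ne_zero {p q : ℕ} (hp : 1 ≤ p) (hq : 1 ≤ q) : scatteringD p q ≠ 0 := by
  set d : Fin 2 →₀ ℕ := Finsupp.single 0 (p - 1) + Finsupp.single 1 (q - 1)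
  have hd : d + Finsupp.single 1 p + Finsupp.single 0 q
      = Finsupp.single 0 (p + q - 1) + Finsupp.single 1 (p + q - 1) := by
    ext i; fin_cases i <;> simp [d] <;> omega
  have hcoeff : coeff d (scatteringD p q) =
      (-1) ^ (p + q - 1) * ((q - 1 + 1).ascFactorial p * (p - 1 + 1).ascFactorial q : ℕ) := by
    rw [scatteringD, coeff_iterate_pderiv, coeff_iterate_pderiv, hd, coeff_one_sub_X_mul_X_pow]
    simp [d]
    ring
  refine ne_zero_iff.mpr ⟨d, ?_⟩
  rw [hcoeff]
  exact mul_ne_zero (pow_ne_zero _ (by norm_num)) (Nat.cast_ne_zero.mpr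
    (Nat.mul_ne_zero (Nat.ascFactorial_pos _ _).ne' (Nat.ascFactorial_pos _ _).ne'))

theorem scatteringPhi_mul_of_norm_eq_one {p q : ℤ} (hp : 1 ≤ p) (hq : 1 ≤ q) {z : ℂ}
    (hz : ‖z‖ = 1) (ζ : ℂ) : scatteringPhi p q (z * ζ) = z ^ (p - q) * scatteringPhi p q ζ := by
  have hz0 : z ≠ 0 := norm_ne_zero_iff.mp (by rw [hz]; exact one_ne_zero)
  have hconj : (starRingEnd ℂ) z = z⁻¹ := by
    simp [Complex.inv_def, Complex.normSq_eq_norm_sq, hz]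
  have hpoint : (fun i : Fin 2 => if i = 0 then z * ζ else (starRingEnd ℂ) (z * ζ))
      = fun i => z ^ charge i * (if i = 0 then ζ else (starRingEnd ℂ) ζ) := by
    ext i; fin_cases i <;> simp [charge, hconj]
  have hdeg : ((p.toNat : ℤ) - q.toNat) = p - q := by omega
  rw [scatteringPhi, scatteringPhi, if_pos ⟨hp, hq⟩, if_pos ⟨hp, hq⟩, hpoint,
    (isWeightedHomogeneous_scatteringD _ _).eval_zpow_mul hz0, hdeg, map_mul, hconj]
  field_simp

theorem exists_scatteringPhi_ne_zero {p q : ℤ} (hp : 1 ≤ p) (hq : 1 ≤ q) :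
    ∃ ζ ∈ ball (0 : ℂ) 1, scatteringPhi p q ζ ≠ 0 := by
  obtain ⟨_, ⟨t, ht, rfl⟩, hne⟩ := exists_eval_diag_ne_zero_of_charge
    (isWeightedHomogeneous_scatteringD _ _)
    (scatteringD_ne_zero (by omega : 1 ≤ p.toNat) (by omega : 1 ≤ q.toNat))
    ((Set.Ioo_infinite (zero_lt_one' ℝ)).image Complex.ofReal_injective.injOn)
  have ht1 : |t| < 1 := abs_lt.mpr ⟨by linarith [ht.1], ht.2⟩
  refine ⟨t, by simpa using ht1, ?_⟩
  have hpoint : (fun i : Fin 2 => if i = 0 then (t : ℂ) else (starRingEnd ℂ) t)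
      = fun _ => (t : ℂ) := by
    ext i; split_ifs <;> simp
  have hdisk : (1 : ℂ) - t * (starRingEnd ℂ) t ≠ 0 := by
    rw [Complex.conj_ofReal]; norm_cast; nlinarith [abs_lt.mp ht1]
  rw [scatteringPhi, if_pos ⟨hp, hq⟩, hpoint]
  refine mul_ne_zero (mul_ne_zero (div_ne_zero (by simp) (mul_ne_zero ?_ ?_)) hdisk) hne
  · exact_mod_cast (by omega : q ≠ 0)
  · exact_mod_cast (Nat.factorial_ne_zero _)

theorem statement6_general (lam : ℕ) :
    LinearIndependent ℂ
      (fun i : {pq : ℤ × ℤ // 1 ≤ pq.1 ∧ 1 ≤ pq.2 ∧ pq.1 * pq.2 = (lam : ℤ)} =>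
        fun ζ : Metric.ball (0 : ℂ) 1 => scatteringPhi i.1.1 i.1.2 (ζ : ℂ)) := by
  refine linearIndependent_of_map_smul_eq_mul (G := sphere (0 : ℂ) 1)
    (χ := fun i => sphereZPowHom (i.1.1 - i.1.2)) ?_ ?_ ?_
  · rintro ⟨⟨p₁, q₁⟩, hp₁, hq₁, h₁⟩ ⟨⟨p₂, q₂⟩, hp₂, hq₂, h₂⟩ h
    have hsub : p₁ - q₁ = p₂ - q₂ := sphereZPowHom_injective h
    obtain ⟨rfl, rfl⟩ :=
      eq_and_eq_of_sub_eq_of_mul_eq (by omega) (by omega) hsub (h₁.trans h₂.symm)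
    rfl
  · rintro ⟨⟨p, q⟩, hp, hq, -⟩ z ζ
    exact scatteringPhi_mul_of_norm_eq_one hp hq (norm_eq_of_mem_sphere z) ζ
  · rintro ⟨⟨p, q⟩, hp, hq, -⟩
    intro h
    obtain ⟨ζ, hζ, hne⟩ := exists_scatteringPhi_ne_zero hp hq
    exact hne (congr_fun h ⟨ζ, hζ⟩)

/-- for every positive integer `λ`, the family of restrictions to the open
unit disk of the scattering polynomials `φ^{(p,q)}`, indexed by pairs `(p,q)` of integers
with `p ≥ 1`, `q ≥ 1` and `pq = λ`, is linearly independent over `ℂ`. -/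
theorem statement6 (lam : ℕ) (hlam : 1 ≤ lam) :
    LinearIndependent ℂ
      (fun i : {pq : ℤ × ℤ // 1 ≤ pq.1 ∧ 1 ≤ pq.2 ∧ pq.1 * pq.2 = (lam : ℤ)} =>
        fun ζ : Metric.ball (0 : ℂ) 1 => scatteringPhi i.1.1 i.1.2 (ζ : ℂ)) :=
  statement6_general lam
end

section
/- Let m be a nonnegative integer, λ ∈ ℂ, and let (b_j)_{j≥0} be a sequence of complex numbers satisfying: b_j = 0 for all j < m; b_{m+1} = 0; and the recurrence ((j+2)² - m²)·b_{j+2} = (j² - m² - 4λ)·b_j for every j ≥ 0. Then the series Σ_{j=0}^∞ b_j converges absolutely, the infinite product ∏_{ν=1}^∞ (1 - λ/(ν(m+ν))) converges, and Σ_{j=0}^∞ b_j = b_m · ∏_{ν=1}^∞ (1 - λ/(ν(m+ν))). Moreover, the infinite product ∏_{ν=1}^∞ (1 - λ/(ν(m+ν))) equals 0 if and only if λ = ν(m+ν) for some integer ν ≥ 1. -/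
/-! With `c k = b (m + 2 k)`, the recurrence at `j = m + 2 k` reads
`(k + 1)(m + k + 1) c (k + 1) = (k (m + k) - λ) c k`, while the odd-indexed terms vanish.
By induction `c (k + 1) = b m · P k · x k`, where `P k` is the `k`-th partial product and
`1 + x k` its next factor, so the partial sums telescope: `c 0 + ⋯ + c K = b m · P K`.
As `‖x k‖ ≤ ‖λ‖ / (k + 1)²`, the product converges, to a nonzero limit unless one of its
factors vanishes, and the bounded `P` makes `∑ ‖c k‖` converge. -/

open Finset Filter Topology

namespace RecurrenceProduct

noncomputable def partialProd (m : ℕ) (lam : ℂ) (J : ℕ) : ℂ :=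
  ∏ ν ∈ Icc 1 J, (1 - lam / ((ν : ℂ) * ((m : ℂ) + (ν : ℂ))))

-- `1 + prodTerm m lam ν` is the factor of `partialProd` with index `ν + 1`.
noncomputable def prodTerm (m : ℕ) (lam : ℂ) (ν : ℕ) : ℂ :=
  -(lam / (((ν : ℂ) + 1) * ((m : ℂ) + ν + 1)))

variable {m : ℕ} {lam : ℂ}

lemma succ_mul_add_succ_ne_zero (m ν : ℕ) : ((ν : ℂ) + 1) * ((m : ℂ) + ν + 1) ≠ 0 := by
  exact_mod_cast (Nat.mul_pos ν.succ_pos (m + ν).succ_pos).ne'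

lemma mul_prodTerm (m : ℕ) (lam : ℂ) (ν : ℕ) :
    ((ν : ℂ) + 1) * ((m : ℂ) + ν + 1) * prodTerm m lam ν = -lam := by
  rw [prodTerm, mul_neg, mul_div_cancel₀ _ (succ_mul_add_succ_ne_zero m ν)]

lemma partialProd_eq_prod_range (J : ℕ) :
    partialProd m lam J = ∏ ν ∈ range J, (1 + prodTerm m lam ν) := by
  induction J with
  | zero => simp [partialProd]
  | succ J ih =>
    rw [partialProd, prod_Icc_succ_top (by omega), ← partialProd, ih, prod_range_succ, prodTerm]
    push_cast
    ring_nf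

lemma partialProd_succ (J : ℕ) :
    partialProd m lam (J + 1) = partialProd m lam J * (1 + prodTerm m lam J) := by
  rw [partialProd_eq_prod_range, partialProd_eq_prod_range, prod_range_succ]

lemma norm_prodTerm_le (ν : ℕ) : ‖prodTerm m lam ν‖ ≤ ‖lam‖ / ((ν : ℝ) + 1) ^ 2 := by
  rw [prodTerm, norm_neg, norm_div]
  gcongr
  rw [show ((ν : ℂ) + 1) * ((m : ℂ) + ν + 1) = (((ν + 1) * (m + ν + 1) : ℕ) : ℂ) by push_cast; ring,
    Complex.norm_natCast]
  push_cast
  nlinarith [(m.cast_nonneg : (0 : ℝ) ≤ m)]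

lemma summable_norm_prodTerm : Summable fun ν ↦ ‖prodTerm m lam ν‖ := by
  refine .of_nonneg_of_le (fun _ ↦ norm_nonneg _) norm_prodTerm_le ?_
  have h := (summable_nat_add_iff 1).2 (Real.summable_one_div_nat_pow.2 one_lt_two)
  exact (h.mul_left ‖lam‖).congr fun ν ↦ by push_cast; ring

lemma tendsto_partialProd :
    Tendsto (partialProd m lam) atTop (𝓝 (∏' ν, (1 + prodTerm m lam ν))) :=
  (multipliable_one_add_of_summable summable_norm_prodTerm).hasProd.tendsto_prod_nat.congr
    fun J ↦ (partialProd_eq_prod_range J).symm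

lemma one_add_prodTerm_eq_zero_iff (ν : ℕ) :
    1 + prodTerm m lam ν = 0 ↔ lam = ((ν + 1 : ℕ) : ℂ) * ((m : ℂ) + ((ν + 1 : ℕ) : ℂ)) := by
  have := succ_mul_add_succ_ne_zero m ν
  rw [prodTerm, ← sub_eq_add_neg, sub_eq_zero, eq_comm, div_eq_one_iff_eq this]
  push_cast
  ring_nf

lemma tprod_one_add_prodTerm_eq_zero_iff :
    ∏' ν, (1 + prodTerm m lam ν) = 0 ↔ ∃ ν : ℕ, 1 ≤ ν ∧ lam = (ν : ℂ) * ((m : ℂ) + (ν : ℂ)) := by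
  constructor
  · intro h
    by_contra! hne
    refine tprod_one_add_ne_zero_of_summable (fun ν hν ↦ ?_) summable_norm_prodTerm h
    exact hne (ν + 1) (by omega) ((one_add_prodTerm_eq_zero_iff ν).1 hν)
  · rintro ⟨ν, hν, rfl⟩
    obtain ⟨μ, rfl⟩ := Nat.exists_eq_add_of_le' hν
    have hzero : ∀ J ≥ μ + 1, partialProd m _ J = 0 := fun J hJ ↦ by
      rw [partialProd_eq_prod_range]
      exact prod_eq_zero (mem_range.2 hJ) ((one_add_prodTerm_eq_zero_iff μ).2 rfl)
    exact tendsto_nhds_unique tendsto_partialProd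
      (tendsto_const_nhds.congr' (eventually_atTop.2 ⟨μ + 1, fun J hJ ↦ (hzero J hJ).symm⟩))

def SatisfiesRecurrence (m : ℕ) (lam : ℂ) (b : ℕ → ℂ) : Prop :=
  ∀ j : ℕ, (((j : ℂ) + 2) ^ 2 - (m : ℂ) ^ 2) * b (j + 2) =
    ((j : ℂ) ^ 2 - (m : ℂ) ^ 2 - 4 * lam) * b j

namespace SatisfiesRecurrence

variable {b : ℕ → ℂ}

lemma odd_eq_zero (hrec : SatisfiesRecurrence m lam b) (h1 : b (m + 1) = 0) (k : ℕ) :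
    b (m + 2 * k + 1) = 0 := by
  induction k with
  | zero => simpa using h1
  | succ k ih =>
    have h := hrec (m + 2 * k + 1)
    rw [ih, mul_zero] at h
    have hne : (((m + 2 * k + 1 : ℕ) : ℂ) + 2) ^ 2 - (m : ℂ) ^ 2 ≠ 0 := by
      rw [show (((m + 2 * k + 1 : ℕ) : ℂ) + 2) ^ 2 - (m : ℂ) ^ 2
          = ((2 * k + 3 : ℕ) : ℂ) * ((2 * m + 2 * k + 3 : ℕ) : ℂ) by push_cast; ring]
      exact mul_ne_zero (by exact_mod_cast (2 * k + 2).succ_ne_zero)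
        (by exact_mod_cast (2 * m + 2 * k + 2).succ_ne_zero)
    simpa [mul_add, add_assoc] using (mul_eq_zero.1 h).resolve_left hne

lemma even_step (hrec : SatisfiesRecurrence m lam b) (k : ℕ) :
    ((k : ℂ) + 1) * ((m : ℂ) + k + 1) * b (m + 2 * k + 2) =
      ((k : ℂ) * ((m : ℂ) + k) - lam) * b (m + 2 * k) := by
  have h := hrec (m + 2 * k)
  push_cast at h
  linear_combination h / 4

lemma mul_even_eq (hrec : SatisfiesRecurrence m lam b) (k : ℕ) :
    ((k : ℂ) + 1) * ((m : ℂ) + k + 1) * b (m + 2 * k + 2) = -lam * b m * partialProd m lam k := by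
  induction k with
  | zero => simpa [partialProd] using hrec.even_step 0
  | succ k ih =>
    have h := hrec.even_step (k + 1)
    rw [show m + 2 * (k + 1) = m + 2 * k + 2 by ring] at h ⊢
    rw [partialProd_succ]
    push_cast at h ⊢
    linear_combination h + (1 + prodTerm m lam k) * ih - b (m + 2 * k + 2) * mul_prodTerm m lam k

lemma even_eq (hrec : SatisfiesRecurrence m lam b) (k : ℕ) :
    b (m + 2 * k + 2) = b m * partialProd m lam k * prodTerm m lam k := by
  rw [← mul_right_inj' (succ_mul_add_succ_ne_zero m k), hrec.mul_even_eq]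
  linear_combination -(b m * partialProd m lam k) * mul_prodTerm m lam k

lemma sum_range_even_eq (hrec : SatisfiesRecurrence m lam b) (K : ℕ) :
    ∑ k ∈ range (K + 1), b (m + 2 * k) = b m * partialProd m lam K := by
  induction K with
  | zero => simp [partialProd]
  | succ K ih =>
    rw [sum_range_succ, ih, show m + 2 * (K + 1) = m + 2 * K + 2 by ring, hrec.even_eq,
      partialProd_succ]
    ring

lemma summable_norm_even (hrec : SatisfiesRecurrence m lam b) :
    Summable fun k ↦ ‖b (m + 2 * k)‖ := by
  obtain ⟨C, hC⟩ := isBounded_iff_forall_norm_le.1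
    (Metric.isBounded_range_of_tendsto _ (tendsto_partialProd (m := m) (lam := lam)))
  refine (summable_nat_add_iff 1).1 <| .of_nonneg_of_le (fun _ ↦ norm_nonneg _) (fun k ↦ ?_)
    ((summable_norm_prodTerm (m := m) (lam := lam)).mul_left (‖b m‖ * C))
  rw [show m + 2 * (k + 1) = m + 2 * k + 2 by ring, hrec.even_eq, norm_mul, norm_mul]
  gcongr
  exact hC _ ⟨k, rfl⟩

lemma hasSum_even (hrec : SatisfiesRecurrence m lam b) :
    HasSum (fun k ↦ b (m + 2 * k)) (b m * ∏' ν, (1 + prodTerm m lam ν)) := by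
  refine (hasSum_iff_tendsto_nat_of_summable_norm hrec.summable_norm_even).2 <|
    (tendsto_add_atTop_iff_nat 1).1 ?_
  simpa only [hrec.sum_range_even_eq] using tendsto_partialProd.const_mul (b m)

lemma eq_zero_of_notMem_range (hrec : SatisfiesRecurrence m lam b) (h0 : ∀ j < m, b j = 0)
    (h1 : b (m + 1) = 0) {j : ℕ} (hj : j ∉ Set.range fun k ↦ m + 2 * k) : b j = 0 := by
  rcases lt_or_ge j m with hjm | hjm
  · exact h0 j hjm
  obtain ⟨i, rfl⟩ := Nat.exists_eq_add_of_le hjm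
  obtain ⟨k, rfl | rfl⟩ := Nat.even_or_odd' i
  · exact absurd ⟨k, rfl⟩ hj
  · simpa [add_assoc] using hrec.odd_eq_zero h1 k

end SatisfiesRecurrence

end RecurrenceProduct

open RecurrenceProduct

/-- let `m ≥ 0`, `λ ∈ ℂ` and let `(b_j)` satisfy `b_j = 0` for `j < m`,
`b_{m+1} = 0`, and `((j+2)² - m²)b_{j+2} = (j² - m² - 4λ)b_j` for all `j ≥ 0`.  Then
`Σ_j b_j` converges absolutely, the infinite product `∏_{ν=1}^∞ (1 - λ/(ν(m+ν)))`
converges (to some `L`, the limit of its partial products), `Σ_j b_j = b_m·L`, and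
`L = 0` if and only if `λ = ν(m+ν)` for some integer `ν ≥ 1`. -/
theorem statement10 (m : ℕ) (lam : ℂ) (b : ℕ → ℂ)
    (h0 : ∀ j, j < m → b j = 0) (h1 : b (m + 1) = 0)
    (hrec : ∀ j : ℕ, (((j : ℂ) + 2) ^ 2 - (m : ℂ) ^ 2) * b (j + 2) =
      ((j : ℂ) ^ 2 - (m : ℂ) ^ 2 - 4 * lam) * b j) :
    Summable (fun j : ℕ => ‖b j‖) ∧
    ∃ L : ℂ,
      Filter.Tendsto
        (fun J : ℕ => ∏ ν ∈ Finset.Icc 1 J, (1 - lam / ((ν : ℂ) * ((m : ℂ) + (ν : ℂ)))))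
        Filter.atTop (nhds L) ∧
      (∑' j : ℕ, b j) = b m * L ∧
      (L = 0 ↔ ∃ ν : ℕ, 1 ≤ ν ∧ lam = (ν : ℂ) * ((m : ℂ) + (ν : ℂ))) := by
  have hb : SatisfiesRecurrence m lam b := hrec
  have hinj : Function.Injective fun k ↦ m + 2 * k := fun k l h ↦ by simpa using h
  have hsupp : ∀ j ∉ Set.range fun k ↦ m + 2 * k, b j = 0 := fun _ ↦
    hb.eq_zero_of_notMem_range h0 h1
  refine ⟨(hinj.summable_iff fun j hj ↦ by simp [hsupp j hj]).1 hb.summable_norm_even, _,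
    tendsto_partialProd, ((hinj.hasSum_iff hsupp).1 hb.hasSum_even).tsum_eq,
    tprod_one_add_prodTerm_eq_zero_iff⟩
end

section
/- Let n ≥ 1 and define U: D^n × ℝ^n → ℂ (where D ⊂ ℝ² is the open unit disk) by U(x_1,y_1,…,x_n,y_n,ξ_1,…,ξ_n) = Ψ((x_1+iy_1,…,x_n+iy_n),(e^{iξ_1},…,e^{iξ_n})). Then for every index 1 ≤ j ≤ n and every point of the domain, -((1-x_j²-y_j²)/4)·((∂U/∂x_j)² + (∂U/∂y_j)²) + (∂U/∂ξ_{j+1})·(∂U/∂ξ_j) = 0, where ∂U/∂ξ_{n+1} is interpreted as 0 (so for j = n the second term is absent). -/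
/-- `Ψ` composed over a list of `(w,z)` pairs, applied to `0`:
`PsiList [(w₁,z₁),…,(wₙ,zₙ)] = Ψ^{w₁}_{z₁} ∘ ⋯ ∘ Ψ^{wₙ}_{zₙ}(0)`, where
`Ψ^{w}_{z}(v) = z(v+w)/(1+conj(w)·v)`. -/
noncomputable def PsiList : List (ℂ × ℂ) → ℂ
  | [] => 0
  | wz :: rest => wz.2 * (PsiList rest + wz.1) / (1 + (starRingEnd ℂ) wz.1 * PsiList rest)

/-- `U(x₁,y₁,…,xₙ,yₙ,ξ₁,…,ξₙ) = Ψ((x₁+iy₁,…,xₙ+iyₙ),(e^{iξ₁},…,e^{iξₙ}))`. -/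
noncomputable def Ufun (n : ℕ) (x y ξ : Fin n → ℝ) : ℂ :=
  PsiList (List.ofFn fun j : Fin n =>
    ((x j : ℂ) + (y j : ℂ) * Complex.I, Complex.exp (Complex.I * (ξ j : ℂ))))

/-! Write `U = Ψ^{w₁}_{z₁}(V)` where `V` is the same function of the remaining `n - 1` variables.
For `j ≥ 2` every derivative in the theorem is `(Ψ^{w₁}_{z₁})'(V)` times the corresponding
derivative of `V`, so the expression for `(n, j)` is `(Ψ^{w₁}_{z₁})'(V)²` times the one for
`(n - 1, j - 1)`. For `j = 1` it is an identity for a single Möbius map: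
`∂U/∂ξ₁ = iU`, `∂U/∂ξ₂ = (Ψ^{w₁}_{z₁})'(V) · iV`, and `∂U/∂x₁`, `∂U/∂y₁` are the derivatives of
`Ψ^{w}_{z₁}(V)` in `w` along `1` and `i`. -/
open Complex Function
open scoped ComplexConjugate

noncomputable def mobius (w z v : ℂ) : ℂ := z * (v + w) / (1 + conj w * v)

lemma one_add_conj_mul_ne_zero {w v : ℂ} (hw : ‖w‖ < 1) (hv : ‖v‖ ≤ 1) :
    1 + conj w * v ≠ 0 := by
  have : ‖conj w * v‖ < 1 := by
    rw [norm_mul, RCLike.norm_conj]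
    nlinarith [norm_nonneg w, norm_nonneg v]
  intro h
  rw [eq_neg_of_add_eq_zero_right h, norm_neg, norm_one] at this
  exact lt_irrefl _ this

lemma norm_mobius_le {w z v : ℂ} (hw : ‖w‖ < 1) (hz : ‖z‖ = 1) (hv : ‖v‖ ≤ 1) :
    ‖mobius w z v‖ ≤ 1 := by
  have hD := one_add_conj_mul_ne_zero hw hv
  rw [mobius, norm_div, norm_mul, hz, one_mul, div_le_one (norm_pos_iff.mpr hD),
    ← sq_le_sq₀ (norm_nonneg _) (norm_nonneg _), ← normSq_eq_norm_sq, ← normSq_eq_norm_sq]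
  have key : normSq (1 + conj w * v) - normSq (v + w) = (1 - normSq w) * (1 - normSq v) := by
    simp only [normSq_apply, add_re, add_im, mul_re, mul_im, conj_re, conj_im, one_re, one_im]
    ring
  have hw2 : normSq w < 1 := by rw [normSq_eq_norm_sq]; nlinarith [norm_nonneg w]
  have hv2 : normSq v ≤ 1 := by rw [normSq_eq_norm_sq]; nlinarith [norm_nonneg v]
  nlinarith

lemma PsiList_cons (p : ℂ × ℂ) (l : List (ℂ × ℂ)) :
    PsiList (p :: l) = mobius p.1 p.2 (PsiList l) := rfl

lemma norm_PsiList_le (l : List (ℂ × ℂ)) (h : ∀ p ∈ l, ‖p.1‖ < 1 ∧ ‖p.2‖ = 1) :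
    ‖PsiList l‖ ≤ 1 := by
  induction l with
  | nil => simp [PsiList]
  | cons p l ih =>
    obtain ⟨hw, hz⟩ := h p List.mem_cons_self
    exact PsiList_cons p l ▸ norm_mobius_le hw hz (ih fun q hq => h q (List.mem_cons_of_mem p hq))

lemma norm_ofReal_add_ofReal_mul_I_lt_one {a b : ℝ} (h : a ^ 2 + b ^ 2 < 1) :
    ‖(a : ℂ) + b * I‖ < 1 := by
  rw [← sq_lt_one_iff₀ (norm_nonneg _), ← normSq_eq_norm_sq, normSq_add_mul_I]
  exact h

lemma norm_Ufun_le {n : ℕ} {x y ξ : Fin n → ℝ} (hxy : ∀ j, x j ^ 2 + y j ^ 2 < 1) :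
    ‖Ufun n x y ξ‖ ≤ 1 := by
  refine norm_PsiList_le _ fun p hp => ?_
  obtain ⟨j, rfl⟩ := List.mem_ofFn.mp hp
  exact ⟨norm_ofReal_add_ofReal_mul_I_lt_one (hxy j), by simp [norm_exp]⟩

lemma Ufun_succ (n : ℕ) (x y ξ : Fin (n + 1) → ℝ) :
    Ufun (n + 1) x y ξ = mobius (x 0 + y 0 * I) (exp (I * ξ 0))
      (Ufun n (Fin.tail x) (Fin.tail y) (Fin.tail ξ)) := by
  simp [Ufun, List.ofFn_succ, PsiList, mobius, Fin.tail]

lemma Ufun_cons (n : ℕ) (a b c : ℝ) (x y ξ : Fin n → ℝ) :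
    Ufun (n + 1) (Fin.cons a x) (Fin.cons b y) (Fin.cons c ξ) =
      mobius (a + b * I) (exp (I * c)) (Ufun n x y ξ) := by
  simp [Ufun_succ]

lemma Ufun_zero (x y ξ : Fin 0 → ℝ) : Ufun 0 x y ξ = 0 := rfl

lemma hasDerivAt_mobius {w v : ℂ} (z : ℂ) (hD : 1 + conj w * v ≠ 0) :
    HasDerivAt (mobius w z) (z * (1 - w * conj w) / (1 + conj w * v) ^ 2) v := by
  have hnum : HasDerivAt (fun s => z * (s + w)) (z * 1) v :=
    ((hasDerivAt_id v).add_const w).const_mul z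
  have hden : HasDerivAt (fun s => 1 + conj w * s) (conj w * 1) v :=
    ((hasDerivAt_id v).const_mul _).const_add 1
  exact (hnum.div hden hD).congr_deriv (by ring)

lemma HasDerivAt.mobius_left {γ : ℝ → ℂ} {u : ℂ} {t₀ : ℝ} (hγ : HasDerivAt γ u t₀) (z : ℂ)
    {v : ℂ} (hD : 1 + conj (γ t₀) * v ≠ 0) :
    HasDerivAt (fun t => mobius (γ t) z v)
      (z * (u * (1 + conj (γ t₀) * v) - conj u * (v + γ t₀) * v) / (1 + conj (γ t₀) * v) ^ 2)
      t₀ := by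
  have hnum : HasDerivAt (fun t => z * (v + γ t)) (z * u) t₀ := (hγ.const_add v).const_mul z
  have hden : HasDerivAt (fun t => 1 + conj (γ t) * v) (conj u * v) t₀ :=
    (hγ.star.mul_const v).const_add 1
  exact (hnum.div hden hD).congr_deriv (by ring)

lemma hasDerivAt_mobius_exp (w v : ℂ) (t₀ : ℝ) :
    HasDerivAt (fun t : ℝ => mobius w (exp (I * t)) v) (I * mobius w (exp (I * t₀)) v) t₀ := by
  have hexp : HasDerivAt (fun t : ℝ => exp (I * t)) (exp (I * t₀) * I) t₀ := by
    simpa using ((hasDerivAt_id (t₀ : ℂ)).const_mul I).cexp.comp_ofReal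
  have hmob (z : ℂ) : mobius w z v = z * ((v + w) / (1 + conj w * v)) := mul_div_assoc _ _ _
  simp only [hmob]
  exact (hexp.mul_const _).congr_deriv (by ring)

lemma DifferentiableAt.mobius {w z v : ℝ → ℂ} {t₀ : ℝ} (hw : DifferentiableAt ℝ w t₀)
    (hz : DifferentiableAt ℝ z t₀) (hv : DifferentiableAt ℝ v t₀)
    (hD : 1 + conj (w t₀) * v t₀ ≠ 0) :
    DifferentiableAt ℝ (fun t => _root_.mobius (w t) (z t) (v t)) t₀ :=
  (hz.mul (hv.add hw)).div ((differentiableAt_const 1).add (hw.star.mul hv)) hD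

lemma differentiableAt_Ufun {n : ℕ} {X Y Ξ : ℝ → Fin n → ℝ} {t₀ : ℝ}
    (hX : DifferentiableAt ℝ X t₀) (hY : DifferentiableAt ℝ Y t₀) (hΞ : DifferentiableAt ℝ Ξ t₀)
    (hxy : ∀ j, X t₀ j ^ 2 + Y t₀ j ^ 2 < 1) :
    DifferentiableAt ℝ (fun t => Ufun n (X t) (Y t) (Ξ t)) t₀ := by
  induction n with
  | zero => simp only [Ufun_zero]; exact differentiableAt_const 0
  | succ n ih =>
    simp only [Ufun_succ]
    have hcoord {F : ℝ → Fin (n + 1) → ℝ} (hF : DifferentiableAt ℝ F t₀) (i : Fin (n + 1)) :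
        DifferentiableAt ℝ (fun t => (F t i : ℂ)) t₀ :=
      ofRealCLM.differentiableAt.comp t₀ (differentiableAt_pi.mp hF i)
    have htail {F : ℝ → Fin (n + 1) → ℝ} (hF : DifferentiableAt ℝ F t₀) :
        DifferentiableAt ℝ (fun t => Fin.tail (F t)) t₀ :=
      differentiableAt_pi.mpr fun i => differentiableAt_pi.mp hF i.succ
    refine DifferentiableAt.mobius ?_ ?_ (ih (htail hX) (htail hY) (htail hΞ) fun j => hxy j.succ)
      (one_add_conj_mul_ne_zero (norm_ofReal_add_ofReal_mul_I_lt_one (hxy 0))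
        (norm_Ufun_le fun j => hxy j.succ))
    · exact (hcoord hX 0).add ((hcoord hY 0).mul_const I)
    · exact ((hcoord hΞ 0).const_mul I).cexp

lemma deriv_Ufun_cons {n : ℕ} {X Y Ξ : ℝ → Fin n → ℝ} {t₀ a b : ℝ} (c : ℝ)
    (hab : a ^ 2 + b ^ 2 < 1) (hX : DifferentiableAt ℝ X t₀) (hY : DifferentiableAt ℝ Y t₀)
    (hΞ : DifferentiableAt ℝ Ξ t₀) (hxy : ∀ j, X t₀ j ^ 2 + Y t₀ j ^ 2 < 1) :
    deriv (fun t => Ufun (n + 1) (Fin.cons a (X t)) (Fin.cons b (Y t)) (Fin.cons c (Ξ t))) t₀ =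
      deriv (mobius (a + b * I) (exp (I * c))) (Ufun n (X t₀) (Y t₀) (Ξ t₀)) *
        deriv (fun t => Ufun n (X t) (Y t) (Ξ t)) t₀ := by
  simp only [Ufun_cons]
  have hD := one_add_conj_mul_ne_zero (norm_ofReal_add_ofReal_mul_I_lt_one hab)
    (norm_Ufun_le (ξ := Ξ t₀) hxy)
  exact deriv_comp t₀ (hasDerivAt_mobius _ hD).differentiableAt
    (differentiableAt_Ufun hX hY hΞ hxy)

lemma deriv_Ufun_update_xi_zero {n : ℕ} (x y ξ : Fin (n + 1) → ℝ) :
    deriv (fun t => Ufun (n + 1) x y (update ξ 0 t)) (ξ 0) = I * Ufun (n + 1) x y ξ := by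
  simp only [Ufun_succ, Fin.tail_update_zero, update_self]
  exact (hasDerivAt_mobius_exp _ _ _).deriv

lemma residual_mobius_eq_zero (w z v : ℂ) (hD : 1 + conj w * v ≠ 0) :
    -((1 - w * conj w) / 4) *
        ((z * (1 + conj w * v - (v + w) * v) / (1 + conj w * v) ^ 2) ^ 2 +
          (z * I * (1 + conj w * v + (v + w) * v) / (1 + conj w * v) ^ 2) ^ 2) +
      z * (1 - w * conj w) / (1 + conj w * v) ^ 2 * (I * v) * (I * mobius w z v) = 0 := by
  rw [mobius]
  ring_nf
  rw [I_sq]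
  field_simp
  ring

noncomputable def nextXiDeriv (n : ℕ) (x y ξ : Fin n → ℝ) (j : Fin n) : ℂ :=
  if h : (j : ℕ) + 1 < n then
    deriv (fun t : ℝ => Ufun n x y (update ξ ⟨(j : ℕ) + 1, h⟩ t)) (ξ ⟨(j : ℕ) + 1, h⟩)
  else 0

noncomputable def ufunResidual (n : ℕ) (x y ξ : Fin n → ℝ) (j : Fin n) : ℂ :=
  -(((1 - (x j) ^ 2 - (y j) ^ 2) / 4 : ℝ) : ℂ) *
      ((deriv (fun t : ℝ => Ufun n (update x j t) y ξ) (x j)) ^ 2 +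
       (deriv (fun t : ℝ => Ufun n x (update y j t) ξ) (y j)) ^ 2) +
    nextXiDeriv n x y ξ j * deriv (fun t : ℝ => Ufun n x y (update ξ j t)) (ξ j)

section Cons

variable {n : ℕ} {a b : ℝ} {x y ξ : Fin n → ℝ} (c : ℝ)

lemma deriv_Ufun_update_x_succ (hab : a ^ 2 + b ^ 2 < 1) (hxy : ∀ j, x j ^ 2 + y j ^ 2 < 1)
    (i : Fin n) :
    deriv (fun t => Ufun (n + 1) (update (Fin.cons a x) i.succ t) (Fin.cons b y) (Fin.cons c ξ))
        (x i) =
      deriv (mobius (a + b * I) (exp (I * c))) (Ufun n x y ξ) *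
        deriv (fun t => Ufun n (update x i t) y ξ) (x i) := by
  simp_rw [← Fin.cons_update]
  rw [deriv_Ufun_cons (X := fun t => update x i t) (Y := fun _ => y) (Ξ := fun _ => ξ) c hab
    (hasDerivAt_update x i _).differentiableAt (differentiableAt_const _)
    (differentiableAt_const _) (by simpa using hxy)]
  simp only [update_eq_self]

lemma deriv_Ufun_update_y_succ (hab : a ^ 2 + b ^ 2 < 1) (hxy : ∀ j, x j ^ 2 + y j ^ 2 < 1)
    (i : Fin n) :
    deriv (fun t => Ufun (n + 1) (Fin.cons a x) (update (Fin.cons b y) i.succ t) (Fin.cons c ξ))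
        (y i) =
      deriv (mobius (a + b * I) (exp (I * c))) (Ufun n x y ξ) *
        deriv (fun t => Ufun n x (update y i t) ξ) (y i) := by
  simp_rw [← Fin.cons_update]
  rw [deriv_Ufun_cons (X := fun _ => x) (Y := fun t => update y i t) (Ξ := fun _ => ξ) c hab
    (differentiableAt_const _) (hasDerivAt_update y i _).differentiableAt
    (differentiableAt_const _) (by simpa using hxy)]
  simp only [update_eq_self]

lemma deriv_Ufun_update_xi_succ (hab : a ^ 2 + b ^ 2 < 1) (hxy : ∀ j, x j ^ 2 + y j ^ 2 < 1)
    (i : Fin n) :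
    deriv (fun t => Ufun (n + 1) (Fin.cons a x) (Fin.cons b y) (update (Fin.cons c ξ) i.succ t))
        (ξ i) =
      deriv (mobius (a + b * I) (exp (I * c))) (Ufun n x y ξ) *
        deriv (fun t => Ufun n x y (update ξ i t)) (ξ i) := by
  simp_rw [← Fin.cons_update]
  rw [deriv_Ufun_cons (X := fun _ => x) (Y := fun _ => y) (Ξ := fun t => update ξ i t) c hab
    (differentiableAt_const _) (differentiableAt_const _)
    (hasDerivAt_update ξ i _).differentiableAt hxy]
  simp only [update_eq_self]

lemma nextXiDeriv_cons_succ (hab : a ^ 2 + b ^ 2 < 1) (hxy : ∀ j, x j ^ 2 + y j ^ 2 < 1)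
    (i : Fin n) :
    nextXiDeriv (n + 1) (Fin.cons a x) (Fin.cons b y) (Fin.cons c ξ) i.succ =
      deriv (mobius (a + b * I) (exp (I * c))) (Ufun n x y ξ) * nextXiDeriv n x y ξ i := by
  unfold nextXiDeriv
  by_cases h : (i : ℕ) + 1 < n
  · rw [dif_pos (by simpa using h), dif_pos h]
    exact deriv_Ufun_update_xi_succ c hab hxy ⟨(i : ℕ) + 1, h⟩
  · rw [dif_neg (by simpa using h), dif_neg h, mul_zero]

lemma nextXiDeriv_cons_zero (hab : a ^ 2 + b ^ 2 < 1) (hxy : ∀ j, x j ^ 2 + y j ^ 2 < 1) :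
    nextXiDeriv (n + 1) (Fin.cons a x) (Fin.cons b y) (Fin.cons c ξ) 0 =
      deriv (mobius (a + b * I) (exp (I * c))) (Ufun n x y ξ) * (I * Ufun n x y ξ) := by
  unfold nextXiDeriv
  cases n with
  -- there is no `ξ₂`, but then `Ufun 0 x y ξ = 0`
  | zero => simp [Ufun_zero]
  | succ m =>
    rw [dif_pos (by simp)]
    exact (deriv_Ufun_update_xi_succ c hab hxy 0).trans
      (congrArg _ (deriv_Ufun_update_xi_zero x y ξ))

lemma ufunResidual_cons_succ (hab : a ^ 2 + b ^ 2 < 1) (hxy : ∀ j, x j ^ 2 + y j ^ 2 < 1)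
    (i : Fin n) :
    ufunResidual (n + 1) (Fin.cons a x) (Fin.cons b y) (Fin.cons c ξ) i.succ =
      deriv (mobius (a + b * I) (exp (I * c))) (Ufun n x y ξ) ^ 2 *
        ufunResidual n x y ξ i := by
  simp only [ufunResidual, nextXiDeriv_cons_succ c hab hxy, Fin.cons_succ,
    deriv_Ufun_update_x_succ c hab hxy, deriv_Ufun_update_y_succ c hab hxy,
    deriv_Ufun_update_xi_succ c hab hxy]
  ring

lemma ufunResidual_cons_zero (hab : a ^ 2 + b ^ 2 < 1) (hxy : ∀ j, x j ^ 2 + y j ^ 2 < 1) :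
    ufunResidual (n + 1) (Fin.cons a x) (Fin.cons b y) (Fin.cons c ξ) 0 = 0 := by
  set w : ℂ := a + b * I
  set z := exp (I * c)
  set v := Ufun n x y ξ
  have hD : 1 + conj w * v ≠ 0 :=
    one_add_conj_mul_ne_zero (norm_ofReal_add_ofReal_mul_I_lt_one hab) (norm_Ufun_le hxy)
  have hx : HasDerivAt (fun t : ℝ => mobius (t + b * I) z v)
      (z * (1 + conj w * v - (v + w) * v) / (1 + conj w * v) ^ 2) a :=
    ((hasDerivAt_id' (x := a)).ofReal_comp.add_const _).mobius_left z hD |>.congr_deriv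
      (by rw [ofReal_one, map_one]; ring)
  have hy : HasDerivAt (fun t : ℝ => mobius (a + t * I) z v)
      (z * I * (1 + conj w * v + (v + w) * v) / (1 + conj w * v) ^ 2) b :=
    (((hasDerivAt_mul_const I).comp_ofReal (z := b)).const_add (a : ℂ)).mobius_left z hD
      |>.congr_deriv (by rw [conj_I]; ring)
  have hcoef : (((1 - a ^ 2 - b ^ 2) / 4 : ℝ) : ℂ) = (1 - w * conj w) / 4 := by
    rw [mul_conj, normSq_add_mul_I]; push_cast; ring
  rw [ufunResidual, nextXiDeriv_cons_zero c hab hxy, deriv_Ufun_update_xi_zero]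
  simp only [Fin.update_cons_zero, Fin.cons_zero, Ufun_cons]
  rw [hx.deriv, hy.deriv, (hasDerivAt_mobius z hD).deriv, hcoef]
  exact residual_mobius_eq_zero w z v hD

end Cons

theorem statement12_general (n : ℕ) (x y ξ : Fin n → ℝ)
    (hxy : ∀ j, (x j) ^ 2 + (y j) ^ 2 < 1) (j : Fin n) :
    -(((1 - (x j) ^ 2 - (y j) ^ 2) / 4 : ℝ) : ℂ) *
        ((deriv (fun t : ℝ => Ufun n (Function.update x j t) y ξ) (x j)) ^ 2 +
         (deriv (fun t : ℝ => Ufun n x (Function.update y j t) ξ) (y j)) ^ 2) +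
      (if h : (j : ℕ) + 1 < n then
          deriv (fun t : ℝ => Ufun n x y (Function.update ξ ⟨(j : ℕ) + 1, h⟩ t))
            (ξ ⟨(j : ℕ) + 1, h⟩)
        else 0) *
        deriv (fun t : ℝ => Ufun n x y (Function.update ξ j t)) (ξ j) = 0 := by
  change ufunResidual n x y ξ j = 0
  induction n with
  | zero => exact j.elim0
  | succ n ih =>
    induction x using Fin.consCases with | cons a x => ?_
    induction y using Fin.consCases with | cons b y => ?_
    induction ξ using Fin.consCases with | cons c ξ => ?_
    have hab : a ^ 2 + b ^ 2 < 1 := by simpa using hxy 0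
    have hxy' : ∀ j, x j ^ 2 + y j ^ 2 < 1 := fun j => by simpa using hxy j.succ
    induction j using Fin.cases with
    | zero => exact ufunResidual_cons_zero c hab hxy'
    | succ i => rw [ufunResidual_cons_succ c hab hxy' i, ih x y ξ hxy' i, mul_zero]

/-- for every `1 ≤ j ≤ n` and every point of `Dⁿ × ℝⁿ`,
`-((1-x_j²-y_j²)/4)((∂U/∂x_j)² + (∂U/∂y_j)²) + (∂U/∂ξ_{j+1})(∂U/∂ξ_j) = 0`,
with `∂U/∂ξ_{n+1}` interpreted as `0`. -/
theorem statement12 (n : ℕ) (hn : 1 ≤ n) (x y ξ : Fin n → ℝ)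
    (hxy : ∀ j, (x j) ^ 2 + (y j) ^ 2 < 1) (j : Fin n) :
    -(((1 - (x j) ^ 2 - (y j) ^ 2) / 4 : ℝ) : ℂ) *
        ((deriv (fun t : ℝ => Ufun n (Function.update x j t) y ξ) (x j)) ^ 2 +
         (deriv (fun t : ℝ => Ufun n x (Function.update y j t) ξ) (y j)) ^ 2) +
      (if h : (j : ℕ) + 1 < n then
          deriv (fun t : ℝ => Ufun n x y (Function.update ξ ⟨(j : ℕ) + 1, h⟩ t))
            (ξ ⟨(j : ℕ) + 1, h⟩)
        else 0) *
        deriv (fun t : ℝ => Ufun n x y (Function.update ξ j t)) (ξ j) = 0 :=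
  statement12_general n x y ξ hxy j
end
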